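/- Let L ⊆ Q be an extension of Hom-Lie algebras with L semiprime, and suppose that Q is an algebra of quotients of L. Then A(Q) is a left quotient algebra of A_0, where A(Q) is the associative subalgebra of End(Q) generated by {ad_q : q ∈ Q} and A_0 = {μ ∈ A(Q) : μ(L) ⊆ L}. -/

import Mathlib

/-- A Hom-Lie algebra structure on a vector space `Q` over a field `𝔽`, with the
twisting map `α` additionally satisfying condition (2.1):
`α [x,y] = [α x, y] = [x, α y]`. -/
structure HomLieAlgebra (𝔽 : Type*) [Field 𝔽] (Q : Type*) [AddCommGroup Q] [Module 𝔽 Q] where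
  bracket : Q →ₗ[𝔽] Q →ₗ[𝔽] Q
  alpha : Q →ₗ[𝔽] Q
  skew : ∀ x y, bracket x y = - bracket y x
  jacobi : ∀ x y z, bracket (alpha x) (bracket y z) + bracket (alpha y) (bracket z x)
      + bracket (alpha z) (bracket x y) = 0
  comm₁ : ∀ x y, alpha (bracket x y) = bracket (alpha x) y
  comm₂ : ∀ x y, alpha (bracket x y) = bracket x (alpha y)

namespace HomLieAlgebra

variable {𝔽 : Type*} [Field 𝔽] {Q : Type*} [AddCommGroup Q] [Module 𝔽 Q]
variable (H : HomLieAlgebra 𝔽 Q)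

/-- `S` is a Hom-subalgebra: a subspace closed under `α` and the bracket. -/
def IsSubalgebra (S : Submodule 𝔽 Q) : Prop :=
  (∀ x ∈ S, H.alpha x ∈ S) ∧ ∀ x ∈ S, ∀ y ∈ S, H.bracket x y ∈ S

/-- `I` is a Hom-ideal of the Hom-subalgebra `L`:
a subspace `I ⊆ L` with `α(I) ⊆ I` and `[I, L] ⊆ I`. -/
def IsIdealOf (L I : Submodule 𝔽 Q) : Prop :=
  I ≤ L ∧ (∀ x ∈ I, H.alpha x ∈ I) ∧ ∀ x ∈ I, ∀ y ∈ L, H.bracket x y ∈ I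

/-- The α-annihilator of the set `S` inside the subalgebra `M`:
`Ann_M(S) = {x ∈ M | [x, α(y)] = 0 for all y ∈ S}`. -/
def annIn (M : Submodule 𝔽 Q) (S : Set Q) : Set Q :=
  {x | x ∈ M ∧ ∀ y ∈ S, H.bracket x (H.alpha y) = 0}

/-- `I` is an essential Hom-ideal of `L`: it hits every nonzero Hom-ideal of `L`. -/
def IsEssentialIdealOf (L I : Submodule 𝔽 Q) : Prop :=
  H.IsIdealOf L I ∧ ∀ J : Submodule 𝔽 Q, H.IsIdealOf L J → J ≠ ⊥ → I ⊓ J ≠ ⊥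

/-- The Hom-Lie algebra `L` is semiprime: `[I, α(I)] ≠ {0}` for every nonzero
Hom-ideal `I` of `L`. -/
def IsSemiprimeOn (L : Submodule 𝔽 Q) : Prop :=
  ∀ I : Submodule 𝔽 Q, H.IsIdealOf L I → I ≠ ⊥ →
    ∃ x ∈ I, ∃ y ∈ I, H.bracket x (H.alpha y) ≠ 0

/-- The Hom-Lie algebra `L` is prime: `[I, α(J)] ≠ {0}` for all nonzero
Hom-ideals `I`, `J` of `L`. -/
def IsPrimeOn (L : Submodule 𝔽 Q) : Prop :=
  ∀ I J : Submodule 𝔽 Q, H.IsIdealOf L I → I ≠ ⊥ → H.IsIdealOf L J → J ≠ ⊥ →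
    ∃ x ∈ I, ∃ y ∈ J, H.bracket x (H.alpha y) ≠ 0

/-- The iterated brackets `[[…[[q,x₁],x₂],…],xₙ]` with `xᵢ ∈ L` (including `q` itself). -/
inductive IsWord (L : Submodule 𝔽 Q) (q : Q) : Q → Prop
  | base : IsWord L q q
  | step {p : Q} (x : Q) : IsWord L q p → x ∈ L → IsWord L q (H.bracket p x)

/-- `_L(q)`: the linear span in `Q` of `q` together with all the iterated brackets
`[[…[[q,x₁],x₂],…],xₙ]` with `xᵢ ∈ L`. -/
def wordSpan (L : Submodule 𝔽 Q) (q : Q) : Submodule 𝔽 Q :=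
  Submodule.span 𝔽 {p | H.IsWord L q p}

/-- `(L : q) = {x ∈ L | [x, α(_L(q))] ⊆ L}`, as a subspace of `Q`. -/
def quotIdeal (L : Submodule 𝔽 Q) (q : Q) : Submodule 𝔽 Q where
  carrier := {x | x ∈ L ∧ ∀ p ∈ H.wordSpan L q, H.bracket x (H.alpha p) ∈ L}
  add_mem' := by
    rintro a b ⟨haL, ha⟩ ⟨hbL, hb⟩
    refine ⟨L.add_mem haL hbL, fun p hp => ?_⟩
    rw [map_add, LinearMap.add_apply]
    exact L.add_mem (ha p hp) (hb p hp)
  zero_mem' := ⟨L.zero_mem, fun p _ => by simp⟩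
  smul_mem' := by
    rintro c a ⟨haL, ha⟩
    refine ⟨L.smul_mem c haL, fun p hp => ?_⟩
    rw [map_smul, LinearMap.smul_apply]
    exact L.smul_mem c (ha p hp)

/-- `Q` is an algebra of quotients of its Hom-subalgebra `L`: for all `p, q ∈ Q` with
`p ≠ 0` there is `x ∈ (L : q)` with `[x, α(p)] ≠ 0`. -/
def IsAlgebraOfQuotients (L : Submodule 𝔽 Q) : Prop :=
  ∀ p q : Q, p ≠ 0 → ∃ x ∈ H.quotIdeal L q, H.bracket x (H.alpha p) ≠ 0

/-- `Q` is a weak algebra of quotients of its Hom-subalgebra `L`: for every nonzero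
`q ∈ Q` there is `x ∈ L` with `0 ≠ [x, α(q)] ∈ L`. -/
def IsWeakAlgebraOfQuotients (L : Submodule 𝔽 Q) : Prop :=
  ∀ q : Q, q ≠ 0 → ∃ x ∈ L, H.bracket x (H.alpha q) ≠ 0 ∧ H.bracket x (H.alpha q) ∈ L

/-- `Q` is ideally absorbed into `L`: for every nonzero `q ∈ Q` there is a Hom-ideal `I`
of `L` with `Ann_L(I) = {0}` and `{0} ≠ [I, α(q)] ⊆ L`. -/
def IsIdeallyAbsorbed (L : Submodule 𝔽 Q) : Prop :=
  ∀ q : Q, q ≠ 0 → ∃ I : Submodule 𝔽 Q, H.IsIdealOf L I ∧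
    H.annIn L (I : Set Q) = {0} ∧
    (∃ y ∈ I, H.bracket y (H.alpha q) ≠ 0) ∧
    ∀ y ∈ I, H.bracket y (H.alpha q) ∈ (L : Set Q)

/-- The inner derivation `ad_q : p ↦ [α(q), p]`. -/
def ad (q : Q) : Module.End 𝔽 Q := H.bracket (H.alpha q)

end HomLieAlgebra

/-- `A(Q)`: the (possibly non-unital) associative subalgebra of `End(Q)` generated by
the inner derivations `ad_q`, `q ∈ Q`, viewed as a set. -/
def assocAlg {𝔽 Q : Type*} [Field 𝔽] [AddCommGroup Q] [Module 𝔽 Q]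
    (H : HomLieAlgebra 𝔽 Q) : Set (Module.End 𝔽 Q) :=
  ↑(NonUnitalAlgebra.adjoin 𝔽 (Set.range H.ad))

/-- `A₀`: the subalgebra of `A(Q)` of those `μ` with `μ(L) ⊆ L`. -/
def assocAlgZero {𝔽 Q : Type*} [Field 𝔽] [AddCommGroup Q] [Module 𝔽 Q]
    (H : HomLieAlgebra 𝔽 Q) (L : Submodule 𝔽 Q) : Set (Module.End 𝔽 Q) :=
  {μ ∈ assocAlg H | ∀ a ∈ L, μ a ∈ L}

/-!
Write `q` as a noncommutative polynomial in `ad_u` for `u` in a finite set `S`, and filter `Q` by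
`F₀ ⊆ F₁ ⊆ ⋯` (`level L S k`), where `F_k` contains `L`, is closed under `α` and `[·, L]`, and
`[S, F_k] ⊆ F_{k+1}`; then `q(F_k) ⊆ F_{k+N}` for some `N`. The Hom-ideal
`I = L ∩ ⋂_{u ∈ S} (L : u)` has zero annihilator in `L` by semiprimeness, hence `[α(I), c] ≠ 0` for
every `c ≠ 0` because `Q` is an algebra of quotients, and by the Hom-Jacobi identity every `ad_i`,
`i ∈ I`, lowers the filtration by one. Choosing `i₀, …, i_N ∈ I` one at a time so that
`ν = ad_{i_N} ⋯ ad_{i₀}` does not kill a given nonzero value of `p`, we get `ν ∈ A₀`, `νp ≠ 0` and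
`νq(L) ⊆ ν(F_{N+1}) ⊆ F₀ = L`.
-/

theorem NonUnitalAlgebra.exists_finset_mem_adjoin_image {R A ι : Type*} [CommSemiring R]
    [NonUnitalNonAssocSemiring A] [Module R A] [IsScalarTower R A A] [SMulCommClass R A A]
    {f : ι → A} {x : A} (hx : x ∈ adjoin R (Set.range f)) :
    ∃ t : Finset ι, x ∈ adjoin R (f '' t) := by
  classical
  induction hx using NonUnitalAlgebra.adjoin_induction with
  | mem x hx =>
    obtain ⟨i, rfl⟩ := hx
    exact ⟨{i}, subset_adjoin R ⟨i, by simp⟩⟩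
  | zero => exact ⟨∅, zero_mem _⟩
  | add x y _ _ hx hy =>
    obtain ⟨t, ht⟩ := hx
    obtain ⟨u, hu⟩ := hy
    refine ⟨t ∪ u, add_mem (adjoin_mono ?_ ht) (adjoin_mono ?_ hu)⟩ <;> gcongr <;> simp
  | mul x y _ _ hx hy =>
    obtain ⟨t, ht⟩ := hx
    obtain ⟨u, hu⟩ := hy
    refine ⟨t ∪ u, mul_mem (adjoin_mono ?_ ht) (adjoin_mono ?_ hu)⟩ <;> gcongr <;> simp
  | smul r x _ hx =>
    obtain ⟨t, ht⟩ := hx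
    exact ⟨t, SMulMemClass.smul_mem r ht⟩

namespace HomLieAlgebra

variable {𝔽 Q : Type*} [Field 𝔽] [AddCommGroup Q] [Module 𝔽 Q] (H : HomLieAlgebra 𝔽 Q)

lemma ad_apply (q p : Q) : H.ad q p = H.bracket (H.alpha q) p := rfl

lemma bracket_alpha_left (x y : Q) : H.bracket (H.alpha x) y = H.alpha (H.bracket x y) :=
  (H.comm₁ x y).symm

lemma bracket_alpha_right (x y : Q) : H.bracket x (H.alpha y) = H.alpha (H.bracket x y) :=
  (H.comm₂ x y).symm

lemma bracket_alpha_swap (x y : Q) : H.bracket (H.alpha x) y = H.bracket x (H.alpha y) := by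
  rw [bracket_alpha_left, bracket_alpha_right]

lemma bracket_alpha_antisymm (x y : Q) : H.bracket x (H.alpha y) = -H.bracket y (H.alpha x) := by
  rw [bracket_alpha_right, bracket_alpha_right, H.skew x y, map_neg]

lemma ad_apply_skew (x y : Q) : H.ad x y = -H.ad y x := by
  rw [ad_apply, ad_apply, bracket_alpha_swap, bracket_alpha_antisymm, bracket_alpha_swap]

lemma ad_neg (x : Q) : H.ad (-x) = -H.ad x := by
  rw [ad, ad, map_neg, map_neg]

lemma jacobi_eq (a b c : Q) : H.bracket (H.alpha a) (H.bracket b c) =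
    -H.bracket (H.alpha b) (H.bracket c a) - H.bracket (H.alpha c) (H.bracket a b) := by
  rw [← sub_eq_zero, ← H.jacobi a b c]
  abel

variable {H} {L I J : Submodule 𝔽 Q}

lemma IsSubalgebra.isIdealOf_self (hL : H.IsSubalgebra L) : H.IsIdealOf L L :=
  ⟨le_rfl, hL.1, hL.2⟩

lemma IsIdealOf.inf (hI : H.IsIdealOf L I) (hJ : H.IsIdealOf L J) : H.IsIdealOf L (I ⊓ J) :=
  ⟨inf_le_left.trans hI.1, fun x hx => ⟨hI.2.1 x hx.1, hJ.2.1 x hx.2⟩,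
    fun x hx y hy => ⟨hI.2.2 x hx.1 y hy, hJ.2.2 x hx.2 y hy⟩⟩

lemma IsIdealOf.bracket_alpha_mem_left (hL : H.IsSubalgebra L) (hI : H.IsIdealOf L I)
    {x y : Q} (hx : x ∈ I) (hy : y ∈ L) : H.bracket x (H.alpha y) ∈ I :=
  hI.2.2 x hx _ (hL.1 y hy)

lemma IsIdealOf.bracket_alpha_mem_right (hL : H.IsSubalgebra L) (hI : H.IsIdealOf L I)
    {x y : Q} (hx : x ∈ L) (hy : y ∈ I) : H.bracket x (H.alpha y) ∈ I := by
  rw [bracket_alpha_antisymm]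
  exact neg_mem (hI.bracket_alpha_mem_left hL hy hx)

lemma bracket_alpha_mem_of_mem_quotIdeal {q x : Q} (hx : x ∈ H.quotIdeal L q) :
    H.bracket x (H.alpha q) ∈ L :=
  hx.2 q (Submodule.subset_span IsWord.base)

lemma isIdealOf_quotIdeal (hL : H.IsSubalgebra L) (q : Q) : H.IsIdealOf L (H.quotIdeal L q) := by
  refine ⟨fun x hx => hx.1, fun x ⟨hxL, hx⟩ => ⟨hL.1 x hxL, fun p hp => ?_⟩,
    fun x ⟨hxL, hx⟩ y hy => ⟨hL.2 x hxL y hy, fun p hp => ?_⟩⟩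
  · rw [bracket_alpha_left]
    exact hL.1 _ (hx p hp)
  · refine (Submodule.span_le (p := (L.comap ((H.bracket (H.bracket x y)).comp H.alpha)))).2
      (fun w hw => ?_) hp
    have hyw : H.bracket (H.alpha x) (H.bracket y w) ∈ L := by
      rw [bracket_alpha_swap, H.skew y w, map_neg, map_neg]
      exact neg_mem (hx _ (Submodule.subset_span (IsWord.step y hw hy)))
    have hwx : H.bracket (H.alpha y) (H.bracket w x) ∈ L := by
      rw [bracket_alpha_swap, H.skew w x, map_neg, ← bracket_alpha_right]
      exact hL.2 y hy _ (neg_mem (hx w (Submodule.subset_span hw)))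
    simp only [SetLike.mem_coe, Submodule.mem_comap, LinearMap.comp_apply]
    rw [H.skew, jacobi_eq, neg_sub, sub_neg_eq_add]
    exact add_mem hwx hyw

variable (H) in
def annihilator (L W : Submodule 𝔽 Q) : Submodule 𝔽 Q where
  carrier := H.annIn L W
  add_mem' := fun ⟨haL, ha⟩ ⟨hbL, hb⟩ =>
    ⟨add_mem haL hbL, fun z hz => by simp [ha z hz, hb z hz]⟩
  zero_mem' := ⟨zero_mem L, fun z _ => by simp⟩
  smul_mem' := fun c _ ⟨haL, ha⟩ => ⟨L.smul_mem c haL, fun z hz => by simp [ha z hz]⟩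

lemma annihilator_anti (h : I ≤ J) : H.annihilator L J ≤ H.annihilator L I :=
  fun _ ⟨hxL, hx⟩ => ⟨hxL, fun y hy => hx y (h hy)⟩

lemma IsIdealOf.annihilator (hL : H.IsSubalgebra L) (hI : H.IsIdealOf L I) :
    H.IsIdealOf L (H.annihilator L I) := by
  refine ⟨fun x hx => hx.1, fun x ⟨hxL, hx⟩ => ⟨hL.1 x hxL, fun z hz => ?_⟩,
    fun x ⟨hxL, hx⟩ y hy => ⟨hL.2 x hxL y hy, fun z hz => ?_⟩⟩
  · rw [bracket_alpha_left, hx z hz, map_zero]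
  · have hxyz : H.bracket (H.alpha x) (H.bracket y z) = 0 := by
      rw [bracket_alpha_swap, H.skew y z, map_neg, map_neg, hx _ (hI.2.2 z hz y hy), neg_zero]
    have hzxy : H.bracket (H.alpha y) (H.bracket z x) = 0 := by
      rw [bracket_alpha_swap, H.skew z x, map_neg, ← bracket_alpha_right, hx z hz, neg_zero,
        map_zero]
    rw [H.skew, jacobi_eq, hxyz, hzxy]
    simp

lemma IsSemiprimeOn.inf_annihilator_eq_bot (hsp : H.IsSemiprimeOn L) (hL : H.IsSubalgebra L)
    (hI : H.IsIdealOf L I) : I ⊓ H.annihilator L I = ⊥ := by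
  by_contra hne
  obtain ⟨x, hx, y, hy, hxy⟩ := hsp _ (hI.inf (hI.annihilator hL)) hne
  exact hxy (hx.2.2 y hy.1)

lemma IsSemiprimeOn.annihilator_inf_eq_bot (hsp : H.IsSemiprimeOn L) (hL : H.IsSubalgebra L)
    (hI : H.IsIdealOf L I) (hJ : H.IsIdealOf L J) (hannI : H.annihilator L I = ⊥)
    (hannJ : H.annihilator L J = ⊥) : H.annihilator L (I ⊓ J) = ⊥ := by
  set K := H.annihilator L (I ⊓ J)
  have hK : H.IsIdealOf L K := (hI.inf hJ).annihilator hL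
  refine (Submodule.eq_bot_iff _).2 fun x hx => ?_
  refine (Submodule.eq_bot_iff _).1 hannI x ⟨hx.1, fun i hi => ?_⟩
  -- `y = [x, α i]` lies in `I ∩ K`, so `[y, α(J)] ⊆ (I ∩ J) ∩ K = 0`, i.e. `y ∈ Ann_L(J) = 0`.
  set y := H.bracket x (H.alpha i)
  have hyI : y ∈ I := hI.bracket_alpha_mem_right hL hx.1 hi
  have hyK : y ∈ K := hK.bracket_alpha_mem_left hL hx (hI.1 hi)
  refine (Submodule.eq_bot_iff _).1 hannJ _ ⟨hI.1 hyI, fun j hj => ?_⟩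
  have hz : H.bracket y (H.alpha j) ∈ (I ⊓ J) ⊓ K :=
    ⟨⟨hI.bracket_alpha_mem_left hL hyI (hJ.1 hj), hJ.bracket_alpha_mem_right hL (hI.1 hyI) hj⟩,
      hK.bracket_alpha_mem_left hL hyK (hJ.1 hj)⟩
  rwa [hsp.inf_annihilator_eq_bot hL (hI.inf hJ), Submodule.mem_bot] at hz

lemma IsAlgebraOfQuotients.annihilator_quotIdeal_eq_bot (hq : H.IsAlgebraOfQuotients L) (u : Q) :
    H.annihilator L (H.quotIdeal L u) = ⊥ := by
  refine (Submodule.eq_bot_iff _).2 fun x hx => ?_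
  by_contra hx0
  obtain ⟨y, hy, hyx⟩ := hq x u hx0
  exact hyx (by rw [bracket_alpha_antisymm, hx.2 y hy, neg_zero])

lemma IsAlgebraOfQuotients.annihilator_self_eq_bot (hq : H.IsAlgebraOfQuotients L) :
    H.annihilator L L = ⊥ :=
  eq_bot_mono (annihilator_anti fun _ (hx : _ ∈ H.quotIdeal L 0) => hx.1)
    (hq.annihilator_quotIdeal_eq_bot 0)

lemma IsIdealOf.inf_finset_inf {ι : Type*} (hL : H.IsSubalgebra L) (s : Finset ι)
    {I : ι → Submodule 𝔽 Q} (hI : ∀ i ∈ s, H.IsIdealOf L (I i)) : H.IsIdealOf L (L ⊓ s.inf I) := by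
  classical
  induction s using Finset.induction_on with
  | empty => simpa using hL.isIdealOf_self
  | insert a s _ ih =>
    rw [Finset.inf_insert, inf_left_comm]
    exact (hI a (by simp)).inf (ih fun i hi => hI i (by simp [hi]))

lemma IsSemiprimeOn.annihilator_inf_finset_inf_eq_bot {ι : Type*} (hsp : H.IsSemiprimeOn L)
    (hL : H.IsSubalgebra L) (hannL : H.annihilator L L = ⊥) (s : Finset ι)
    {I : ι → Submodule 𝔽 Q} (hI : ∀ i ∈ s, H.IsIdealOf L (I i))
    (hann : ∀ i ∈ s, H.annihilator L (I i) = ⊥) : H.annihilator L (L ⊓ s.inf I) = ⊥ := by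
  classical
  induction s using Finset.induction_on with
  | empty => simpa using hannL
  | insert a s _ ih =>
    rw [Finset.inf_insert, inf_left_comm]
    exact hsp.annihilator_inf_eq_bot hL (hI a (by simp))
      (IsIdealOf.inf_finset_inf hL s fun i hi => hI i (by simp [hi])) (hann a (by simp))
      (ih (fun i hi => hI i (by simp [hi])) fun i hi => hann i (by simp [hi]))

lemma IsAlgebraOfQuotients.exists_ad_ne_zero (hq : H.IsAlgebraOfQuotients L)
    (hI : H.IsIdealOf L I) (hannI : H.annihilator L I = ⊥) {c : Q} (hc : c ≠ 0) :
    ∃ i ∈ I, H.ad i c ≠ 0 := by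
  by_contra! h
  have hcI : ∀ j ∈ I, H.ad c j = 0 := fun j hj => by rw [ad_apply_skew, h j hj, neg_zero]
  obtain ⟨x, hx, hxc⟩ := hq c c hc
  refine hxc ((Submodule.eq_bot_iff _).1 hannI _
    ⟨bracket_alpha_mem_of_mem_quotIdeal hx, fun i hi => ?_⟩)
  have hαc : H.ad (H.alpha c) (H.bracket i x) = 0 := by
    rw [ad_apply, bracket_alpha_left, ← ad_apply, hcI _ (hI.2.2 i hi x hx.1), map_zero]
  rw [H.skew, jacobi_eq, ← H.ad_apply c i, hcI i hi, ← H.ad_apply (H.alpha c), hαc]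
  simp

variable (H) in
inductive IsLevel (L : Submodule 𝔽 Q) (S : Set Q) : ℕ → Q → Prop
  | of_mem {k a} : a ∈ L → IsLevel L S k a
  | succ {k g} : IsLevel L S k g → IsLevel L S (k + 1) g
  | add {k g g'} : IsLevel L S k g → IsLevel L S k g' → IsLevel L S k (g + g')
  | smul {k g} (c : 𝔽) : IsLevel L S k g → IsLevel L S k (c • g)
  | alpha {k g} : IsLevel L S k g → IsLevel L S k (H.alpha g)
  | bracket_right {k g x} : IsLevel L S k g → x ∈ L → IsLevel L S k (H.bracket g x)
  | bracket_left {k g u} : u ∈ S → IsLevel L S k g → IsLevel L S (k + 1) (H.bracket u g)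

variable (H) in
def level (L : Submodule 𝔽 Q) (S : Set Q) (k : ℕ) : Submodule 𝔽 Q where
  carrier := {g | H.IsLevel L S k g}
  add_mem' := IsLevel.add
  zero_mem' := IsLevel.of_mem (zero_mem L)
  smul_mem' c _ := IsLevel.smul c

variable {S : Set Q}

lemma le_level (k : ℕ) : L ≤ H.level L S k := fun _ => IsLevel.of_mem

lemma level_mono : Monotone (H.level L S) :=
  monotone_nat_of_le_succ fun _ _ => IsLevel.succ

lemma level_zero_le (hL : H.IsSubalgebra L) : H.level L S 0 ≤ L := by
  suffices ∀ {k g}, H.IsLevel L S k g → k = 0 → g ∈ L from fun _ hg => this hg rfl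
  intro k g hg
  induction hg with
  | of_mem ha => exact fun _ => ha
  | succ | bracket_left => exact fun h => absurd h (Nat.succ_ne_zero _)
  | add _ _ ih ih' => exact fun h => add_mem (ih h) (ih' h)
  | smul c _ ih => exact fun h => L.smul_mem c (ih h)
  | alpha _ ih => exact fun h => hL.1 _ (ih h)
  | bracket_right _ hx ih => exact fun h => hL.2 _ (ih h) _ hx

lemma ad_mem_level_succ {u g : Q} {k : ℕ} (hu : u ∈ S) (hg : g ∈ H.level L S k) :
    H.ad u g ∈ H.level L S (k + 1) := by
  rw [ad_apply, bracket_alpha_left]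
  exact IsLevel.alpha (IsLevel.bracket_left hu hg)

/-- At `k = 0` this says that `ad_i` maps `F₀` into itself. -/
lemma ad_mem_level_pred (hL : H.IsSubalgebra L) (hI : H.IsIdealOf L I)
    (hIS : ∀ u ∈ S, ∀ i ∈ I, H.bracket i (H.alpha u) ∈ L) {k : ℕ} {g : Q}
    (hg : g ∈ H.level L S k) {i : Q} (hi : i ∈ I) : H.ad i g ∈ H.level L S (k - 1) := by
  induction hg generalizing i with
  | of_mem ha => exact le_level _ (hL.2 _ (hL.1 _ (hI.1 hi)) _ ha)
  | succ _ ih => exact level_mono (by omega) (ih hi)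
  | add _ _ ih ih' => rw [map_add]; exact add_mem (ih hi) (ih' hi)
  | smul c _ ih => rw [map_smul]; exact Submodule.smul_mem _ c (ih hi)
  | alpha _ ih => rw [ad_apply, bracket_alpha_right]; exact IsLevel.alpha (ih hi)
  | @bracket_right k g x hg hx ih =>
    have hgx : H.ad g (H.bracket x i) ∈ H.level L S (k - 1) := by
      rw [ad_apply_skew, H.skew x i, ad_neg, LinearMap.neg_apply, neg_neg]
      exact ih (hI.2.2 i hi x hx)
    have hxi : H.ad x (H.bracket i g) ∈ H.level L S (k - 1) := by
      rw [ad_apply, bracket_alpha_swap, ← bracket_alpha_left, ← ad_apply, H.skew]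
      exact neg_mem (IsLevel.bracket_right (ih hi) hx)
    rw [ad_apply, jacobi_eq]
    exact sub_mem (neg_mem hgx) hxi
  | @bracket_left k g u hu hg ih =>
    have hgi : H.ad g (H.bracket i u) ∈ H.level L S k := by
      rw [ad_apply, bracket_alpha_swap, ← bracket_alpha_right]
      exact IsLevel.bracket_right hg (hIS u hu i hi)
    have hug : H.ad u (H.bracket g i) ∈ H.level L S k := by
      cases k with
      | zero =>
        have hgiI : H.bracket g i ∈ I := by
          rw [H.skew]
          exact neg_mem (hI.2.2 i hi g (level_zero_le hL hg))
        rw [ad_apply_skew, ad_apply, bracket_alpha_swap]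
        exact neg_mem (le_level _ (hIS u hu _ hgiI))
      | succ k =>
        have hig := ih hi
        rw [Nat.add_sub_cancel] at hig
        rw [ad_apply, bracket_alpha_swap, H.skew g i, map_neg, ← bracket_alpha_left, ← ad_apply,
          map_neg]
        exact neg_mem (IsLevel.bracket_left hu hig)
    rw [Nat.add_sub_cancel, ad_apply, jacobi_eq]
    exact sub_mem (neg_mem hug) hgi

lemma exists_mapsTo_level_of_mem_adjoin {q : Module.End 𝔽 Q}
    (hq : q ∈ NonUnitalAlgebra.adjoin 𝔽 (H.ad '' S)) :
    ∃ N, ∀ k, ∀ g ∈ H.level L S k, q g ∈ H.level L S (k + N) := by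
  induction hq using NonUnitalAlgebra.adjoin_induction with
  | mem x hx =>
    obtain ⟨u, hu, rfl⟩ := hx
    exact ⟨1, fun k g hg => ad_mem_level_succ hu hg⟩
  | zero => exact ⟨0, fun k g _ => zero_mem _⟩
  | add x y _ _ hx hy =>
    obtain ⟨N, hN⟩ := hx
    obtain ⟨M, hM⟩ := hy
    exact ⟨max N M, fun k g hg => add_mem (level_mono (by omega) (hN k g hg))
      (level_mono (by omega) (hM k g hg))⟩
  | mul x y _ _ hx hy =>
    obtain ⟨N, hN⟩ := hx
    obtain ⟨M, hM⟩ := hy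
    exact ⟨M + N, fun k g hg => by rw [← add_assoc]; exact hN _ _ (hM k g hg)⟩
  | smul r x _ hx =>
    obtain ⟨N, hN⟩ := hx
    exact ⟨N, fun k g hg => Submodule.smul_mem _ r (hN k g hg)⟩

lemma exists_mem_adjoin_mapsTo_level_ne_zero (hL : H.IsSubalgebra L) (hI : H.IsIdealOf L I)
    (hIS : ∀ u ∈ S, ∀ i ∈ I, H.bracket i (H.alpha u) ∈ L)
    (hIQ : ∀ c : Q, c ≠ 0 → ∃ i ∈ I, H.ad i c ≠ 0) (N : ℕ) {c : Q} (hc : c ≠ 0) :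
    ∃ ν ∈ NonUnitalAlgebra.adjoin 𝔽 (Set.range H.ad),
      (∀ k, ∀ g ∈ H.level L S (k + N + 1), ν g ∈ H.level L S k) ∧ ν c ≠ 0 := by
  induction N with
  | zero =>
    obtain ⟨i, hi, hic⟩ := hIQ c hc
    exact ⟨H.ad i, NonUnitalAlgebra.subset_adjoin 𝔽 ⟨i, rfl⟩,
      fun k g hg => ad_mem_level_pred hL hI hIS hg hi, hic⟩
  | succ N ih =>
    obtain ⟨ν, hν, hνS, hνc⟩ := ih
    obtain ⟨i, hi, hic⟩ := hIQ _ hνc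
    refine ⟨H.ad i * ν, mul_mem (NonUnitalAlgebra.subset_adjoin 𝔽 ⟨i, rfl⟩) hν,
      fun k g hg => ?_, hic⟩
    exact ad_mem_level_pred hL hI hIS (hνS (k + 1) g (by rwa [add_right_comm k 1])) hi

end HomLieAlgebra

/-- If `L` is a semiprime Hom-subalgebra of `Q` and `Q` is an algebra of quotients
of `L`, then `A(Q)` is a left quotient algebra of `A₀`. -/
theorem assocAlg_leftQuotient_of_isAlgebraOfQuotients
    {𝔽 Q : Type*} [Field 𝔽] [AddCommGroup Q] [Module 𝔽 Q]
    (H : HomLieAlgebra 𝔽 Q) (L : Submodule 𝔽 Q) (hL : H.IsSubalgebra L)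
    (hsp : H.IsSemiprimeOn L) (hq : H.IsAlgebraOfQuotients L) :
    ∀ p q : Module.End 𝔽 Q, p ∈ assocAlg H → q ∈ assocAlg H → p ≠ 0 →
      ∃ x ∈ assocAlgZero H L, x * p ≠ 0 ∧ x * q ∈ assocAlgZero H L := by
  intro p q hpA hqA hp
  obtain ⟨S, hqS⟩ := NonUnitalAlgebra.exists_finset_mem_adjoin_image hqA
  obtain ⟨N, hqN⟩ := HomLieAlgebra.exists_mapsTo_level_of_mem_adjoin (L := L) hqS
  set I := L ⊓ S.inf (H.quotIdeal L)
  have hI : H.IsIdealOf L I :=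
    .inf_finset_inf hL S fun u _ => HomLieAlgebra.isIdealOf_quotIdeal hL u
  have hannI : H.annihilator L I = ⊥ := hsp.annihilator_inf_finset_inf_eq_bot hL
    hq.annihilator_self_eq_bot S (fun u _ => HomLieAlgebra.isIdealOf_quotIdeal hL u)
    fun u _ => hq.annihilator_quotIdeal_eq_bot u
  have hIS : ∀ u ∈ (S : Set Q), ∀ i ∈ I, H.bracket i (H.alpha u) ∈ L := fun u hu i hi =>
    HomLieAlgebra.bracket_alpha_mem_of_mem_quotIdeal (Finset.inf_le (f := H.quotIdeal L) hu hi.2)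
  obtain ⟨b, hb⟩ : ∃ b, p b ≠ 0 := not_forall.1 fun h => hp (LinearMap.ext h)
  obtain ⟨ν, hν, hνS, hνb⟩ := HomLieAlgebra.exists_mem_adjoin_mapsTo_level_ne_zero hL hI hIS
    (fun c hc => hq.exists_ad_ne_zero hI hannI hc) N hb
  have hνL : ∀ g ∈ H.level L S (N + 1), ν g ∈ L := fun g hg =>
    HomLieAlgebra.level_zero_le hL (hνS 0 g (by rwa [zero_add]))
  refine ⟨ν, ⟨hν, fun a ha => hνL a (HomLieAlgebra.le_level _ ha)⟩, fun h => hνb ?_,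
    mul_mem hν hqA, fun a ha => hνL _ (HomLieAlgebra.level_mono (by omega)
      (hqN 0 a (HomLieAlgebra.le_level _ ha)))⟩
  simpa using LinearMap.congr_fun h b
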